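/- arXiv:2411.16494 — 3 statements merged into one kernel-verified Lean document; each statement's English description precedes it below -/
import Mathlib

section
/- Let θ ∈ (-π/2,π/2), let A = cos(θ/2)(-iα₁∂_x - α₂x) and B = sin(θ/2)(-α₁∂_x - iα₂x) act on C_c^∞(ℝ)⁴ ⊂ L²(ℝ;ℂ⁴). Then for every ψ ∈ C_c^∞(ℝ)⁴ and every k ∈ ℝ: (i) ‖(A+ik)ψ‖² = ‖Aψ‖² + k²‖ψ‖² ≥ cos²(θ/2)(‖ψ'‖² + ‖xψ‖²) + (k² - cos²(θ/2))‖ψ‖²; (ii) ‖Bψ‖² ≤ sin²(θ/2)(‖ψ'‖² + ‖xψ‖² + ‖ψ‖²); consequently, if k² > 1, there exists a constant b < 1 (independent of ψ) such that ‖Bψ‖ ≤ b‖(A+ik)ψ‖ for all ψ ∈ C_c^∞(ℝ)⁴. -/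
noncomputable section

open MeasureTheory Filter Complex
open scoped InnerProductSpace

/-- The state space `ℂ⁴`. -/
abbrev E4 : Type := EuclideanSpace ℂ (Fin 4)

/-- The Hilbert space `L²(ℝ; ℂ⁴)`. -/
abbrev HS := Lp E4 2 (volume : Measure ℝ)

/-- Action of a `4 × 4` complex matrix on `ℂ⁴`. -/
def mvec (M : Matrix (Fin 4) (Fin 4) ℂ) (v : E4) : E4 :=
  (WithLp.equiv 2 (Fin 4 → ℂ)).symm (M.mulVec ((WithLp.equiv 2 (Fin 4 → ℂ)) v))

/-- The Dirac matrix `α₁ = [[0, σ₁], [σ₁, 0]]`. -/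
def alpha1 : Matrix (Fin 4) (Fin 4) ℂ :=
  !![0, 0, 0, 1; 0, 0, 1, 0; 0, 1, 0, 0; 1, 0, 0, 0]

/-- The Dirac matrix `α₂ = [[0, σ₂], [σ₂, 0]]`. -/
def alpha2 : Matrix (Fin 4) (Fin 4) ℂ :=
  !![0, 0, 0, -Complex.I; 0, 0, Complex.I, 0; 0, -Complex.I, 0, 0; Complex.I, 0, 0, 0]

/-- The Dirac matrix `α₃ = [[0, σ₃], [σ₃, 0]]`. -/
def alpha3 : Matrix (Fin 4) (Fin 4) ℂ :=
  !![0, 0, 1, 0; 0, 0, 0, -1; 1, 0, 0, 0; 0, -1, 0, 0]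

/-- The Dirac matrix `α₀ = [[I₂, 0], [0, -I₂]]`. -/
def alpha0 : Matrix (Fin 4) (Fin 4) ℂ :=
  !![1, 0, 0, 0; 0, 1, 0, 0; 0, 0, -1, 0; 0, 0, 0, -1]

/-- `g` is the distributional (weak) derivative of `f`. -/
def IsWeakDeriv {E : Type*} [NormedAddCommGroup E] [NormedSpace ℂ E]
    (f g : ℝ → E) : Prop :=
  ∀ φ : ℝ → ℂ, ContDiff ℝ (⊤ : ℕ∞) φ → HasCompactSupport φ →
    ∫ x : ℝ, deriv φ x • f x = - ∫ x : ℝ, φ x • g x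

/-- Membership in `𝒟 = H¹(ℝ) ∩ L²(ℝ, x² dx)`. -/
def MemFormDom {E : Type*} [NormedAddCommGroup E] [NormedSpace ℂ E]
    (f : ℝ → E) : Prop :=
  MemLp f 2 volume ∧ (∃ g, MemLp g 2 volume ∧ IsWeakDeriv f g) ∧
    MemLp (fun x : ℝ => (x : ℂ) • f x) 2 volume

/-- Membership in `D(S_θ) = H²(ℝ) ∩ L²(ℝ, x⁴ dx)`. -/
def MemSDom {E : Type*} [NormedAddCommGroup E] [NormedSpace ℂ E]
    (f : ℝ → E) : Prop :=
  MemLp f 2 volume ∧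
    (∃ g h, IsWeakDeriv f g ∧ MemLp g 2 volume ∧ IsWeakDeriv g h ∧ MemLp h 2 volume) ∧
    MemLp (fun x : ℝ => ((x : ℂ) ^ 2) • f x) 2 volume

/-- The graph of the rotated relativistic harmonic oscillator `H_θ` with mass `m`:
`InGraphH θ m ψ χ` holds iff `ψ ∈ D(H_θ) = 𝒟⁴` and
`χ = -i e^{-iθ/2} α₁ ψ' - e^{iθ/2} α₂ (xψ) + m α₃ ψ`. -/
def InGraphH (θ m : ℝ) (ψ χ : HS) : Prop :=
  MemFormDom (ψ : ℝ → E4) ∧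
  ∃ g : ℝ → E4, IsWeakDeriv (ψ : ℝ → E4) g ∧
    (χ : ℝ → E4) =ᵐ[volume] fun x : ℝ =>
      (-Complex.I * Complex.exp (-(θ / 2 : ℝ) * Complex.I)) • mvec alpha1 (g x)
        - Complex.exp ((θ / 2 : ℝ) * Complex.I) • mvec alpha2 ((x : ℂ) • ψ x)
        + (m : ℂ) • mvec alpha3 (ψ x)

/-- `R` is the (bounded, everywhere defined) inverse of `T - z`, where `T` is the operator
whose graph is the relation `Graph`. -/
def IsResolventOf (Graph : HS → HS → Prop) (z : ℂ) (R : HS →L[ℂ] HS) : Prop :=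
  (∀ χ : HS, Graph (R χ) (χ + z • R χ)) ∧
  (∀ ψ χ : HS, Graph ψ χ → R (χ - z • ψ) = ψ)

/-- `z` belongs to the resolvent set `ρ(H_θ)`. -/
def InResolventSetH (θ m : ℝ) (z : ℂ) : Prop :=
  ∃ R : HS →L[ℂ] HS, IsResolventOf (InGraphH θ m) z R

/-- `z` belongs to the `ε`-pseudospectrum `σ_ε(H_θ)` (with the convention `σ₀ = σ`). -/
def InPseudospectrumH (θ m ε : ℝ) (z : ℂ) : Prop :=
  ¬ InResolventSetH θ m z ∨
    (0 < ε ∧ ∃ R : HS →L[ℂ] HS, IsResolventOf (InGraphH θ m) z R ∧ 1 / ε < ‖R‖)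


/-- Pointwise action of the symmetric part `A = cos(θ/2)(-i α₁ ∂_x - α₂ x)`. -/
def Apt (θ : ℝ) (ψ : ℝ → E4) : ℝ → E4 := fun x : ℝ =>
  (Real.cos (θ / 2) : ℂ) •
    ((-Complex.I) • mvec alpha1 (deriv ψ x) - mvec alpha2 ((x : ℂ) • ψ x))

/-- Pointwise action of the anti-symmetric part `B = sin(θ/2)(-α₁ ∂_x - i α₂ x)`. -/
def Bpt (θ : ℝ) (ψ : ℝ → E4) : ℝ → E4 := fun x : ℝ =>
  (Real.sin (θ / 2) : ℂ) •
    (-(mvec alpha1 (deriv ψ x)) - Complex.I • mvec alpha2 ((x : ℂ) • ψ x))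

/-- The squared `L²(ℝ; ℂ⁴)` norm. -/
def L2sq (f : ℝ → E4) : ℝ := ∫ x : ℝ, ‖f x‖ ^ 2

/-!
Pointwise, only the Clifford relations `α₁² = α₂² = 1`, `α₁α₂ + α₂α₁ = 0` and the self-adjointness
of `α₁, α₂` enter. The cross terms of `‖(-iα₁∂ₓ - α₂x)ψ‖²` and `‖(-α₁∂ₓ - iα₂x)ψ‖²` are
`±2x Re⟨Σ₃ψ', ψ⟩` with `Σ₃ = iα₂α₁` self-adjoint and unitary; this is `x` times the derivative of
`Re⟨Σ₃ψ, ψ⟩`, so an integration by parts turns it into `∓∫ Re⟨Σ₃ψ, ψ⟩`, which is bounded by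
`‖ψ‖²`. The cross term between `Aψ` and `ikψ` is a multiple of `(Re⟨α₁ψ, ψ⟩)'` and integrates to
zero. Finally `|θ| < π/2` gives `sin²(θ/2) < cos²(θ/2)`, and for `k² > 1` the two estimates yield
`‖Bψ‖² ≤ sin²(θ/2) / min(cos²(θ/2), k² - cos²(θ/2)) · ‖(A + ik)ψ‖²`.
-/

open ContinuousLinearMap

theorem HasCompactSupport.integrable_of_continuous_of_eq_zero {E F : Type*}
    [NormedAddCommGroup E] [NormedSpace ℝ E] [NormedAddCommGroup F] {ψ : ℝ → E} {f : ℝ → F}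
    (hψ : HasCompactSupport ψ) (hf : Continuous f)
    (hfψ : ∀ x, ψ x = 0 → deriv ψ x = 0 → f x = 0) : Integrable f := by
  refine hf.integrable_of_hasCompactSupport (hψ.mono' fun x hx => ?_)
  by_contra hxψ
  exact hx (hfψ x (image_eq_zero_of_notMem_tsupport hxψ)
    (Function.notMem_support.1 fun hx' => hxψ (support_deriv_subset hx')))

theorem integral_norm_ofReal_smul_sq {F : Type*} [NormedAddCommGroup F] [NormedSpace ℂ F] (c : ℝ)
    (f : ℝ → F) :
    ∫ x, ‖(c : ℂ) • f x‖ ^ 2 = c ^ 2 * ∫ x, ‖f x‖ ^ 2 := by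
  simp_rw [norm_smul, mul_pow, Complex.norm_real, Real.norm_eq_abs, sq_abs]
  exact integral_const_mul _ _

section CliffordPair

variable {E : Type*} [NormedAddCommGroup E] [InnerProductSpace ℂ E] [CompleteSpace E]

structure IsCliffordPair (a b : E →L[ℂ] E) : Prop where
  isSelfAdjoint_left : IsSelfAdjoint a
  isSelfAdjoint_right : IsSelfAdjoint b
  mul_self_left : a * a = 1
  mul_self_right : b * b = 1
  anticomm : a * b + b * a = 0

/-- For `a = α₁`, `b = α₂` this is `Σ₃ = diag(σ₃, σ₃)`. -/
def cliffordSpin (a b : E →L[ℂ] E) : E →L[ℂ] E := I • (b * a)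

/-- `-i a ∂ₓ - b x`; for `a = α₁`, `b = α₂` this is `A / cos(θ/2)`. -/
def symmDirac (a b : E →L[ℂ] E) (ψ : ℝ → E) (x : ℝ) : E :=
  (-I) • a (deriv ψ x) - b ((x : ℂ) • ψ x)

/-- `-a ∂ₓ - i b x`; for `a = α₁`, `b = α₂` this is `B / sin(θ/2)`. -/
def skewDirac (a b : E →L[ℂ] E) (ψ : ℝ → E) (x : ℝ) : E :=
  -a (deriv ψ x) - I • b ((x : ℂ) • ψ x)

variable {a b T : E →L[ℂ] E} {ψ : ℝ → E}

theorem IsSelfAdjoint.inner_apply_left (hT : IsSelfAdjoint T) (u v : E) :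
    ⟪T u, v⟫_ℂ = ⟪u, T v⟫_ℂ :=
  hT.isSymmetric u v

theorem re_inner_cliffordSpin_apply (hb : IsSelfAdjoint b) (u v : E) :
    (⟪cliffordSpin a b u, v⟫_ℂ).re = (⟪a u, b v⟫_ℂ).im := by
  simp [cliffordSpin, hb.inner_apply_left]

theorem re_inner_smul_symmDirac_I_mul_smul (hb : IsSelfAdjoint b) (c k x : ℝ) :
    (⟪(c : ℂ) • symmDirac a b ψ x, (I * k) • ψ x⟫_ℂ).re
      = -(c * k) * (⟪a (deriv ψ x), ψ x⟫_ℂ).re := by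
  have hreal : (⟪b (ψ x), ψ x⟫_ℂ).im = 0 := hb.isSymmetric.im_inner_apply_self (ψ x)
  simp only [symmDirac, inner_smul_left, inner_smul_right, inner_sub_left, map_smul, map_neg,
    conj_I, conj_ofReal, mul_re, mul_im, sub_re, sub_im, neg_re, neg_im, I_re, I_im, ofReal_re,
    ofReal_im, hreal]
  ring

theorem HasDerivAt.reApplyInnerSelf (hT : IsSelfAdjoint T) {ψ' : E} {x : ℝ}
    (hψ : HasDerivAt ψ ψ' x) :
    HasDerivAt (fun t => T.reApplyInnerSelf (ψ t)) (2 * (⟪T ψ', ψ x⟫_ℂ).re) x := by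
  have hTψ : HasDerivAt (fun t => T (ψ t)) (T ψ') x :=
    (T.restrictScalars ℝ).hasFDerivAt.comp_hasDerivAt x hψ
  refine (Complex.reCLM.hasFDerivAt.comp_hasDerivAt x (hTψ.inner ℂ hψ)).congr_deriv ?_
  rw [reCLM_apply, add_re, hT.inner_apply_left, ← inner_conj_symm, conj_re]
  ring

theorem integral_re_inner_deriv_eq_zero (hT : IsSelfAdjoint T) (hψ : ContDiff ℝ 1 ψ)
    (hs : HasCompactSupport ψ) : ∫ x, (⟪T (deriv ψ x), ψ x⟫_ℂ).re = 0 := by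
  have hψ' := hψ.continuous_deriv le_rfl
  have h := integral_eq_zero_of_hasDerivAt_of_integrable
    (fun x => ((hψ.differentiable one_ne_zero x).hasDerivAt).reApplyInnerSelf hT)
    (hs.integrable_of_continuous_of_eq_zero (by fun_prop) (by simp +contextual))
    (hs.integrable_of_continuous_of_eq_zero (T.reApplyInnerSelf_continuous.comp hψ.continuous)
      (by simp +contextual [reApplyInnerSelf_apply]))
  rwa [integral_const_mul, mul_eq_zero, or_iff_right two_ne_zero] at h

theorem integral_mul_re_inner_deriv (hT : IsSelfAdjoint T) (hψ : ContDiff ℝ 1 ψ)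
    (hs : HasCompactSupport ψ) :
    ∫ x, x * (⟪T (deriv ψ x), ψ x⟫_ℂ).re = -(∫ x, T.reApplyInnerSelf (ψ x)) / 2 := by
  have hψ' := hψ.continuous_deriv le_rfl
  have hFc : Continuous fun x => T.reApplyInnerSelf (ψ x) :=
    T.reApplyInnerSelf_continuous.comp hψ.continuous
  have hF : Integrable fun x => T.reApplyInnerSelf (ψ x) :=
    hs.integrable_of_continuous_of_eq_zero hFc (by simp +contextual [reApplyInnerSelf_apply])
  have hxF' : Integrable fun x => x * (2 * (⟪T (deriv ψ x), ψ x⟫_ℂ).re) :=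
    hs.integrable_of_continuous_of_eq_zero (by fun_prop) (by simp +contextual)
  have h := integral_eq_zero_of_hasDerivAt_of_integrable
    (fun x => (hasDerivAt_id' x).mul
      (((hψ.differentiable one_ne_zero x).hasDerivAt).reApplyInnerSelf hT))
    (by simpa only [one_mul, Pi.add_def] using hF.add hxF')
    (hs.integrable_of_continuous_of_eq_zero (continuous_id.mul hFc)
      (by simp +contextual [reApplyInnerSelf_apply]))
  simp only [one_mul] at h
  rw [integral_add hF hxF'] at h
  simp_rw [mul_left_comm _ (2 : ℝ)] at h
  rw [integral_const_mul] at h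
  linarith

theorem integral_norm_smul_symmDirac_add_sq (ha : IsSelfAdjoint a) (hb : IsSelfAdjoint b)
    (c k : ℝ) (hψ : ContDiff ℝ 1 ψ) (hs : HasCompactSupport ψ) :
    ∫ x, ‖(c : ℂ) • symmDirac a b ψ x + (I * k) • ψ x‖ ^ 2
      = (∫ x, ‖(c : ℂ) • symmDirac a b ψ x‖ ^ 2) + k ^ 2 * ∫ x, ‖ψ x‖ ^ 2 := by
  have hψ' := hψ.continuous_deriv le_rfl
  have hψc := hψ.continuous
  have hpt : ∀ x, ‖(c : ℂ) • symmDirac a b ψ x + (I * k) • ψ x‖ ^ 2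
      = ‖(c : ℂ) • symmDirac a b ψ x‖ ^ 2 + k ^ 2 * ‖ψ x‖ ^ 2
        - 2 * (c * k) * (⟪a (deriv ψ x), ψ x⟫_ℂ).re := fun x => by
    rw [@norm_add_sq ℂ, RCLike.re_to_complex, re_inner_smul_symmDirac_I_mul_smul hb,
      norm_smul (I * (k : ℂ)), norm_mul, Complex.norm_I, one_mul, Complex.norm_real,
      Real.norm_eq_abs, mul_pow, sq_abs]
    ring
  have hS : Integrable fun x => ‖(c : ℂ) • symmDirac a b ψ x‖ ^ 2 :=
    hs.integrable_of_continuous_of_eq_zero (by unfold symmDirac; fun_prop)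
      (by simp +contextual [symmDirac])
  have hP : Integrable fun x => k ^ 2 * ‖ψ x‖ ^ 2 :=
    hs.integrable_of_continuous_of_eq_zero (by fun_prop) (by simp +contextual)
  have hSP : Integrable fun x => ‖(c : ℂ) • symmDirac a b ψ x‖ ^ 2 + k ^ 2 * ‖ψ x‖ ^ 2 :=
    hS.add hP
  have hR : Integrable fun x => 2 * (c * k) * (⟪a (deriv ψ x), ψ x⟫_ℂ).re :=
    hs.integrable_of_continuous_of_eq_zero (by fun_prop) (by simp +contextual)
  simp_rw [hpt]
  rw [integral_sub hSP hR, integral_add hS hP, integral_const_mul, integral_const_mul,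
    integral_re_inner_deriv_eq_zero ha hψ hs]
  ring

namespace IsCliffordPair

theorem symm (h : IsCliffordPair a b) : IsCliffordPair b a :=
  ⟨h.isSelfAdjoint_right, h.isSelfAdjoint_left, h.mul_self_right, h.mul_self_left,
    by rw [add_comm, h.anticomm]⟩

theorem norm_left_apply (h : IsCliffordPair a b) (v : E) : ‖a v‖ = ‖v‖ :=
  norm_map_of_mem_unitary (Unitary.mem_iff.2 <| by
    simp only [h.isSelfAdjoint_left.star_eq, h.mul_self_left, and_self]) v

theorem norm_right_apply (h : IsCliffordPair a b) (v : E) : ‖b v‖ = ‖v‖ :=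
  h.symm.norm_left_apply v

theorem isSelfAdjoint_cliffordSpin (h : IsCliffordPair a b) :
    IsSelfAdjoint (cliffordSpin a b) := by
  rw [cliffordSpin, IsSelfAdjoint, star_smul, star_mul, h.isSelfAdjoint_left.star_eq,
    h.isSelfAdjoint_right.star_eq, eq_neg_of_add_eq_zero_left h.anticomm]
  simp

theorem abs_reApplyInnerSelf_cliffordSpin_le (h : IsCliffordPair a b) (v : E) :
    |(cliffordSpin a b).reApplyInnerSelf v| ≤ ‖v‖ ^ 2 :=
  calc |(cliffordSpin a b).reApplyInnerSelf v| ≤ ‖cliffordSpin a b v‖ * ‖v‖ :=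
        (abs_re_le_norm _).trans (norm_inner_le_norm _ _)
    _ = ‖v‖ ^ 2 := by
      simp [cliffordSpin, norm_smul, h.norm_left_apply, h.norm_right_apply, sq]

theorem abs_integral_reApplyInnerSelf_cliffordSpin_le (h : IsCliffordPair a b)
    (hψ : Continuous ψ) (hs : HasCompactSupport ψ) :
    |∫ x, (cliffordSpin a b).reApplyInnerSelf (ψ x)| ≤ ∫ x, ‖ψ x‖ ^ 2 :=
  norm_integral_le_of_norm_le (f := fun x => (cliffordSpin a b).reApplyInnerSelf (ψ x))
    (g := fun x => ‖ψ x‖ ^ 2)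
    (hs.integrable_of_continuous_of_eq_zero (by fun_prop) (by simp +contextual))
    (.of_forall fun x => h.abs_reApplyInnerSelf_cliffordSpin_le (ψ x))

theorem norm_neg_I_smul_sub_sq (h : IsCliffordPair a b) (u v : E) :
    ‖(-I) • a u - b v‖ ^ 2 = ‖u‖ ^ 2 + ‖v‖ ^ 2 + 2 * (⟪cliffordSpin a b u, v⟫_ℂ).re := by
  rw [@norm_sub_sq ℂ, inner_smul_left, re_inner_cliffordSpin_apply h.isSelfAdjoint_right,
    norm_smul, h.norm_left_apply, h.norm_right_apply]
  simp only [norm_neg, norm_I, one_mul, map_neg, conj_I, neg_neg, RCLike.mul_re,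
    RCLike.re_to_complex, I_re, zero_mul, RCLike.im_to_complex, I_im, zero_sub, mul_neg,
    sub_neg_eq_add]
  ring

theorem norm_neg_sub_I_smul_sq (h : IsCliffordPair a b) (u v : E) :
    ‖-a u - I • b v‖ ^ 2 = ‖u‖ ^ 2 + ‖v‖ ^ 2 - 2 * (⟪cliffordSpin a b u, v⟫_ℂ).re := by
  rw [← neg_add', norm_neg, @norm_add_sq ℂ, inner_smul_right,
    re_inner_cliffordSpin_apply h.isSelfAdjoint_right, norm_smul, h.norm_left_apply,
    h.norm_right_apply]
  simp only [RCLike.mul_re, RCLike.re_to_complex, I_re, zero_mul, RCLike.im_to_complex, I_im,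
    one_mul, zero_sub, mul_neg, norm_I]
  ring

theorem norm_symmDirac_sq (h : IsCliffordPair a b) (x : ℝ) :
    ‖symmDirac a b ψ x‖ ^ 2 = ‖deriv ψ x‖ ^ 2 + ‖(x : ℂ) • ψ x‖ ^ 2
      + 2 * (x * (⟪cliffordSpin a b (deriv ψ x), ψ x⟫_ℂ).re) := by
  rw [symmDirac, h.norm_neg_I_smul_sub_sq, inner_smul_right, re_ofReal_mul]

theorem norm_skewDirac_sq (h : IsCliffordPair a b) (x : ℝ) :
    ‖skewDirac a b ψ x‖ ^ 2 = ‖deriv ψ x‖ ^ 2 + ‖(x : ℂ) • ψ x‖ ^ 2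
      - 2 * (x * (⟪cliffordSpin a b (deriv ψ x), ψ x⟫_ℂ).re) := by
  rw [skewDirac, h.norm_neg_sub_I_smul_sq, inner_smul_right, re_ofReal_mul]

theorem integral_norm_symmDirac_sq (h : IsCliffordPair a b) (hψ : ContDiff ℝ 1 ψ)
    (hs : HasCompactSupport ψ) :
    ∫ x, ‖symmDirac a b ψ x‖ ^ 2 = (∫ x, ‖deriv ψ x‖ ^ 2) + (∫ x : ℝ, ‖(x : ℂ) • ψ x‖ ^ 2)
      - ∫ x, (cliffordSpin a b).reApplyInnerSelf (ψ x) := by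
  have hψ' := hψ.continuous_deriv le_rfl
  have hψc := hψ.continuous
  have hD : Integrable fun x => ‖deriv ψ x‖ ^ 2 :=
    hs.integrable_of_continuous_of_eq_zero (by fun_prop) (by simp +contextual)
  have hX : Integrable fun x : ℝ => ‖(x : ℂ) • ψ x‖ ^ 2 :=
    hs.integrable_of_continuous_of_eq_zero (by fun_prop) (by simp +contextual)
  have hDX : Integrable fun x : ℝ => ‖deriv ψ x‖ ^ 2 + ‖(x : ℂ) • ψ x‖ ^ 2 := hD.add hX
  have hC : Integrable fun x : ℝ => 2 * (x * (⟪cliffordSpin a b (deriv ψ x), ψ x⟫_ℂ).re) :=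
    hs.integrable_of_continuous_of_eq_zero (by fun_prop) (by simp +contextual)
  simp_rw [h.norm_symmDirac_sq]
  rw [integral_add hDX hC, integral_add hD hX, integral_const_mul,
    integral_mul_re_inner_deriv h.isSelfAdjoint_cliffordSpin hψ hs]
  ring

theorem integral_norm_skewDirac_sq (h : IsCliffordPair a b) (hψ : ContDiff ℝ 1 ψ)
    (hs : HasCompactSupport ψ) :
    ∫ x, ‖skewDirac a b ψ x‖ ^ 2 = (∫ x, ‖deriv ψ x‖ ^ 2) + (∫ x : ℝ, ‖(x : ℂ) • ψ x‖ ^ 2)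
      + ∫ x, (cliffordSpin a b).reApplyInnerSelf (ψ x) := by
  have hψ' := hψ.continuous_deriv le_rfl
  have hψc := hψ.continuous
  have hD : Integrable fun x => ‖deriv ψ x‖ ^ 2 :=
    hs.integrable_of_continuous_of_eq_zero (by fun_prop) (by simp +contextual)
  have hX : Integrable fun x : ℝ => ‖(x : ℂ) • ψ x‖ ^ 2 :=
    hs.integrable_of_continuous_of_eq_zero (by fun_prop) (by simp +contextual)
  have hDX : Integrable fun x : ℝ => ‖deriv ψ x‖ ^ 2 + ‖(x : ℂ) • ψ x‖ ^ 2 := hD.add hX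
  have hC : Integrable fun x : ℝ => 2 * (x * (⟪cliffordSpin a b (deriv ψ x), ψ x⟫_ℂ).re) :=
    hs.integrable_of_continuous_of_eq_zero (by fun_prop) (by simp +contextual)
  simp_rw [h.norm_skewDirac_sq]
  rw [integral_sub hDX hC, integral_add hD hX, integral_const_mul,
    integral_mul_re_inner_deriv h.isSelfAdjoint_cliffordSpin hψ hs]
  ring

end IsCliffordPair

end CliffordPair

theorem isSelfAdjoint_alpha1 : IsSelfAdjoint alpha1 := by
  ext i j; fin_cases i <;> fin_cases j <;> simp [alpha1, Matrix.star_apply]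

theorem isSelfAdjoint_alpha2 : IsSelfAdjoint alpha2 := by
  ext i j; fin_cases i <;> fin_cases j <;> simp [alpha2, Matrix.star_apply]

theorem alpha1_mul_self : alpha1 * alpha1 = 1 := by
  ext i j; fin_cases i <;> fin_cases j <;> simp [alpha1, Matrix.mul_apply, Fin.sum_univ_four]

theorem alpha2_mul_self : alpha2 * alpha2 = 1 := by
  ext i j; fin_cases i <;> fin_cases j <;> simp [alpha2, Matrix.mul_apply, Fin.sum_univ_four]

theorem alpha1_mul_alpha2_add_alpha2_mul_alpha1 : alpha1 * alpha2 + alpha2 * alpha1 = 0 := by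
  ext i j; fin_cases i <;> fin_cases j <;> simp [alpha1, alpha2]

local notation "α₁" => Matrix.toEuclideanCLM (n := Fin 4) (𝕜 := ℂ) alpha1
local notation "α₂" => Matrix.toEuclideanCLM (n := Fin 4) (𝕜 := ℂ) alpha2

theorem isCliffordPair_alpha1_alpha2 : IsCliffordPair α₁ α₂ where
  isSelfAdjoint_left := isSelfAdjoint_alpha1.map _
  isSelfAdjoint_right := isSelfAdjoint_alpha2.map _
  mul_self_left := by rw [← map_mul, alpha1_mul_self, map_one]
  mul_self_right := by rw [← map_mul, alpha2_mul_self, map_one]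
  anticomm := by
    rw [← map_mul, ← map_mul, ← map_add, alpha1_mul_alpha2_add_alpha2_mul_alpha1, map_zero]

theorem L2sq_nonneg (f : ℝ → E4) : 0 ≤ L2sq f :=
  integral_nonneg fun _ => sq_nonneg _

section DiracMatrices

variable {θ k : ℝ} {ψ : ℝ → E4}

theorem L2sq_Apt_add_I_mul_smul (hψ : ContDiff ℝ 1 ψ) (hs : HasCompactSupport ψ) :
    L2sq (fun x => Apt θ ψ x + (I * k) • ψ x) = L2sq (Apt θ ψ) + k ^ 2 * L2sq ψ :=
  integral_norm_smul_symmDirac_add_sq isCliffordPair_alpha1_alpha2.isSelfAdjoint_left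
    isCliffordPair_alpha1_alpha2.isSelfAdjoint_right _ k hψ hs

theorem L2sq_Apt (hψ : ContDiff ℝ 1 ψ) (hs : HasCompactSupport ψ) :
    L2sq (Apt θ ψ) = Real.cos (θ / 2) ^ 2 * (L2sq (deriv ψ) + L2sq (fun x : ℝ => (x : ℂ) • ψ x)
      - ∫ x, (cliffordSpin α₁ α₂).reApplyInnerSelf (ψ x)) :=
  (integral_norm_ofReal_smul_sq _ _).trans <|
    congrArg _ (isCliffordPair_alpha1_alpha2.integral_norm_symmDirac_sq hψ hs)

theorem L2sq_Bpt (hψ : ContDiff ℝ 1 ψ) (hs : HasCompactSupport ψ) :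
    L2sq (Bpt θ ψ) = Real.sin (θ / 2) ^ 2 * (L2sq (deriv ψ) + L2sq (fun x : ℝ => (x : ℂ) • ψ x)
      + ∫ x, (cliffordSpin α₁ α₂).reApplyInnerSelf (ψ x)) :=
  (integral_norm_ofReal_smul_sq _ _).trans <|
    congrArg _ (isCliffordPair_alpha1_alpha2.integral_norm_skewDirac_sq hψ hs)

theorem abs_integral_reApplyInnerSelf_cliffordSpin_le_L2sq (hψ : Continuous ψ)
    (hs : HasCompactSupport ψ) : |∫ x, (cliffordSpin α₁ α₂).reApplyInnerSelf (ψ x)| ≤ L2sq ψ :=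
  isCliffordPair_alpha1_alpha2.abs_integral_reApplyInnerSelf_cliffordSpin_le hψ hs

theorem L2sq_Apt_add_I_mul_smul_ge (hψ : ContDiff ℝ 1 ψ) (hs : HasCompactSupport ψ) :
    L2sq (fun x => Apt θ ψ x + (I * k) • ψ x)
      ≥ Real.cos (θ / 2) ^ 2 * (L2sq (deriv ψ) + L2sq (fun x : ℝ => (x : ℂ) • ψ x))
        + (k ^ 2 - Real.cos (θ / 2) ^ 2) * L2sq ψ := by
  have hF := (abs_le.1 (abs_integral_reApplyInnerSelf_cliffordSpin_le_L2sq hψ.continuous hs)).2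
  rw [L2sq_Apt_add_I_mul_smul hψ hs, L2sq_Apt hψ hs]
  nlinarith [mul_le_mul_of_nonneg_left hF (sq_nonneg (Real.cos (θ / 2)))]

theorem L2sq_Bpt_le (hψ : ContDiff ℝ 1 ψ) (hs : HasCompactSupport ψ) :
    L2sq (Bpt θ ψ)
      ≤ Real.sin (θ / 2) ^ 2 * (L2sq (deriv ψ) + L2sq (fun x : ℝ => (x : ℂ) • ψ x) + L2sq ψ) := by
  have hF := (abs_le.1 (abs_integral_reApplyInnerSelf_cliffordSpin_le_L2sq hψ.continuous hs)).2
  rw [L2sq_Bpt hψ hs]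
  nlinarith [mul_le_mul_of_nonneg_left hF (sq_nonneg (Real.sin (θ / 2)))]

end DiracMatrices

theorem Real.sin_sq_half_lt_cos_sq_half {θ : ℝ}
    (hθ : θ ∈ Set.Ioo (-(Real.pi / 2)) (Real.pi / 2)) : sin (θ / 2) ^ 2 < cos (θ / 2) ^ 2 := by
  have h := cos_two_mul' (θ / 2)
  rw [mul_div_cancel₀ θ two_ne_zero] at h
  linarith [cos_pos_of_mem_Ioo hθ]

theorem exists_lt_one_sqrt_le_mul_sqrt {c s k : ℝ} (hs : 0 ≤ s) (hsc : s < c) (hk : s + c < k) :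
    ∃ b < 1, ∀ {D P X Y : ℝ}, 0 ≤ D → 0 ≤ P → X ≥ c * D + (k - c) * P → Y ≤ s * (D + P) →
      √Y ≤ b * √X := by
  set m := min c (k - c)
  have hsm : s < m := lt_min hsc (by linarith)
  have hm : 0 < m := hs.trans_lt hsm
  refine ⟨√(s / m), (Real.sqrt_lt' one_pos).2 (by rw [one_pow]; exact (div_lt_one hm).2 hsm),
    fun {D P X Y} hD hP hX hY => ?_⟩
  have hmX : m * (D + P) ≤ X := by
    nlinarith [mul_le_mul_of_nonneg_right (min_le_left c (k - c)) hD,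
      mul_le_mul_of_nonneg_right (min_le_right c (k - c)) hP]
  have hYX : Y ≤ s / m * X :=
    calc Y ≤ s * (D + P) := hY
      _ = s / m * (m * (D + P)) := by field_simp
      _ ≤ s / m * X := by gcongr
  calc √Y ≤ √(s / m * X) := Real.sqrt_le_sqrt hYX
    _ = √(s / m) * √X := Real.sqrt_mul (div_nonneg hs hm.le) X

/-- for every `ψ ∈ C_c^∞(ℝ)⁴` and `k ∈ ℝ`:
(i) `‖(A+ik)ψ‖² = ‖Aψ‖² + k²‖ψ‖² ≥ cos²(θ/2)(‖ψ'‖² + ‖xψ‖²) + (k² - cos²(θ/2))‖ψ‖²`;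
(ii) `‖Bψ‖² ≤ sin²(θ/2)(‖ψ'‖² + ‖xψ‖² + ‖ψ‖²)`;
and consequently, if `k² > 1`, there is `b < 1` with `‖Bψ‖ ≤ b‖(A+ik)ψ‖` for all such `ψ`. -/
theorem AB_estimates (θ : ℝ) (hθ : θ ∈ Set.Ioo (-(Real.pi / 2)) (Real.pi / 2)) (k : ℝ) :
    (∀ ψ : ℝ → E4, ContDiff ℝ (⊤ : ℕ∞) ψ → HasCompactSupport ψ →
      (L2sq (fun x : ℝ => Apt θ ψ x + (Complex.I * (k : ℂ)) • ψ x)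
          = L2sq (Apt θ ψ) + k ^ 2 * L2sq ψ) ∧
      (L2sq (fun x : ℝ => Apt θ ψ x + (Complex.I * (k : ℂ)) • ψ x)
          ≥ Real.cos (θ / 2) ^ 2 * (L2sq (deriv ψ) + L2sq (fun x : ℝ => (x : ℂ) • ψ x))
            + (k ^ 2 - Real.cos (θ / 2) ^ 2) * L2sq ψ) ∧
      (L2sq (Bpt θ ψ)
          ≤ Real.sin (θ / 2) ^ 2 *
            (L2sq (deriv ψ) + L2sq (fun x : ℝ => (x : ℂ) • ψ x) + L2sq ψ))) ∧
    (k ^ 2 > 1 → ∃ b : ℝ, b < 1 ∧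
      ∀ ψ : ℝ → E4, ContDiff ℝ (⊤ : ℕ∞) ψ → HasCompactSupport ψ →
        Real.sqrt (L2sq (Bpt θ ψ))
          ≤ b * Real.sqrt (L2sq (fun x : ℝ => Apt θ ψ x + (Complex.I * (k : ℂ)) • ψ x))) := by
  have smooth_C1 {ψ : ℝ → E4} (hψ : ContDiff ℝ (⊤ : ℕ∞) ψ) : ContDiff ℝ 1 ψ :=
    hψ.of_le (by exact_mod_cast le_top)
  refine ⟨fun ψ hψ hs => ⟨L2sq_Apt_add_I_mul_smul (smooth_C1 hψ) hs,
    L2sq_Apt_add_I_mul_smul_ge (smooth_C1 hψ) hs, L2sq_Bpt_le (smooth_C1 hψ) hs⟩, fun hk => ?_⟩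
  obtain ⟨b, hb, hbound⟩ := exists_lt_one_sqrt_le_mul_sqrt (k := k ^ 2) (sq_nonneg _)
    (Real.sin_sq_half_lt_cos_sq_half hθ) (by linarith [Real.sin_sq_add_cos_sq (θ / 2)])
  exact ⟨b, hb, fun ψ hψ hs => hbound (add_nonneg (L2sq_nonneg _) (L2sq_nonneg _))
    (L2sq_nonneg _) (L2sq_Apt_add_I_mul_smul_ge (smooth_C1 hψ) hs) (L2sq_Bpt_le (smooth_C1 hψ) hs)⟩
end
end

section
/- Let θ ∈ (-π/2,π/2) and m ≥ 0. For every ε ≥ 0 and every z ∈ ℂ, z ∈ σ_ε(H_θ) if and only if -z ∈ σ_ε(H_θ). -/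
noncomputable section

open MeasureTheory Filter Complex
open scoped InnerProductSpace

/-!
`α₀` is a unitary involution that anticommutes with `α₁`, `α₂` and `α₃`, so the pointwise
multiplication `U = α₀·` on `L²(ℝ; ℂ⁴)` preserves `𝒟⁴` and satisfies `U H_θ U = -H_θ`.
Hence `U (H_θ - z) U = -(H_θ + z)`: if `R = (H_θ - z)⁻¹` then `(H_θ + z)⁻¹ = -U R U`, which
has the same norm as `R`.
-/

open ContinuousLinearMap

theorem norm_mul_mul_of_mul_self_eq_one {A : Type*} [SeminormedRing A] {v : A}
    (hv : ‖v‖ ≤ 1) (hvv : v * v = 1) (r : A) : ‖v * r * v‖ = ‖r‖ := by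
  have hle : ∀ s : A, ‖v * s * v‖ ≤ ‖s‖ := fun s => calc
    ‖v * s * v‖ ≤ ‖v‖ * ‖s‖ * ‖v‖ := norm_mul₃_le
    _ ≤ 1 * ‖s‖ * 1 := by gcongr
    _ = ‖s‖ := by ring
  refine (hle r).antisymm ?_
  calc ‖r‖ = ‖v * (v * r * v) * v‖ := by
        rw [← mul_assoc, ← mul_assoc, hvv, one_mul, mul_assoc, hvv, mul_one]
    _ ≤ ‖v * r * v‖ := hle _

theorem IsResolventOf.neg_mul_mul {G : HS → HS → Prop} {V : HS →L[ℂ] HS} (hVV : V * V = 1)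
    (hV : ∀ ψ χ, G ψ χ → G (V ψ) (-V χ)) (hnegV : ∀ ψ χ, G ψ χ → G (-V ψ) (V χ))
    {z : ℂ} {R : HS →L[ℂ] HS} (hR : IsResolventOf G z R) :
    IsResolventOf G (-z) (-(V * R * V)) := by
  have hinv (f : HS) : V (V f) = f := by rw [← mul_apply_eq_comp, hVV, one_apply_eq_self]
  refine ⟨fun χ => ?_, fun ψ χ hψχ => ?_⟩
  · convert hnegV _ _ (hR.1 (V χ)) using 1
    · simp
    · simp [hinv]
  · have hback := hR.2 _ _ (hV ψ χ hψχ)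
    have harg : -V χ - z • V ψ = -V (χ - (-z) • ψ) := by
      simp only [map_sub, map_smul]
      module
    calc (-(V * R * V)) (χ - (-z) • ψ) = V (R (-V χ - z • V ψ)) := by
          rw [harg, map_neg, map_neg]
          rfl
      _ = ψ := by rw [hback, hinv]

section WeakDerivative

variable {E F : Type*} [NormedAddCommGroup E] [NormedSpace ℂ E]
  [NormedAddCommGroup F] [NormedSpace ℂ F]

theorem IsWeakDeriv.congr_ae {f f' g g' : ℝ → E} (h : IsWeakDeriv f g)
    (hf : f =ᵐ[volume] f') (hg : g =ᵐ[volume] g') : IsWeakDeriv f' g' := by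
  intro φ hφ hφc
  have hf' : (fun x => deriv φ x • f x) =ᵐ[volume] fun x => deriv φ x • f' x :=
    hf.mono fun x hx => congrArg (deriv φ x • ·) hx
  have hg' : (fun x => φ x • g x) =ᵐ[volume] fun x => φ x • g' x :=
    hg.mono fun x hx => congrArg (φ x • ·) hx
  rw [← integral_congr_ae hf', ← integral_congr_ae hg']
  exact h φ hφ hφc

theorem IsWeakDeriv.comp_antilipschitz [CompleteSpace E] [CompleteSpace F] {f g : ℝ → E}
    (h : IsWeakDeriv f g) (L : E →L[ℂ] F) {K : NNReal} (hL : AntilipschitzWith K L) :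
    IsWeakDeriv (fun x => L (f x)) (fun x => L (g x)) := by
  intro φ hφ hφc
  simp only [← map_smul, L.integral_comp_comm' hL, h φ hφ hφc, map_neg]

theorem MemFormDom.congr_ae {f f' : ℝ → E} (h : MemFormDom f) (hf : f =ᵐ[volume] f') :
    MemFormDom f' := by
  obtain ⟨hf2, ⟨g, hg, hfg⟩, hxf⟩ := h
  exact ⟨hf2.ae_eq hf, ⟨g, hg, hfg.congr_ae hf .rfl⟩,
    hxf.ae_eq (hf.mono fun x hx => by simp only [hx])⟩

theorem MemFormDom.comp_antilipschitz [CompleteSpace E] [CompleteSpace F] {f : ℝ → E}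
    (h : MemFormDom f) (L : E →L[ℂ] F) {K : NNReal} (hL : AntilipschitzWith K L) :
    MemFormDom (fun x => L (f x)) := by
  obtain ⟨hf2, ⟨g, hg, hfg⟩, hxf⟩ := h
  refine ⟨L.comp_memLp' hf2, ⟨_, L.comp_memLp' hg, hfg.comp_antilipschitz L hL⟩, ?_⟩
  simpa only [Function.comp_def, map_smul] using L.comp_memLp' hxf

end WeakDerivative

section CompLpL

variable {E F : Type*} [NormedAddCommGroup E] [NormedSpace ℂ E] [NormedAddCommGroup F]
  [NormedSpace ℂ F] {α : Type*} [MeasurableSpace α] {μ : Measure α} {p : ENNReal}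
  [Fact (1 ≤ p)]

theorem ContinuousLinearMap.neg_compLpL (L : E →L[ℂ] F) :
    (-L).compLpL p μ = -L.compLpL p μ := by
  simpa using smul_compLpL (μ := μ) (p := p) (-1 : ℂ) L

theorem ContinuousLinearMap.mul_compLpL (L L' : E →L[ℂ] E) :
    (L * L').compLpL p μ = L.compLpL p μ * L'.compLpL p μ := by
  ext1 f
  refine Lp.ext ?_
  filter_upwards [coeFn_compLpL (L * L') f, coeFn_compLpL L (L'.compLpL p μ f),
    coeFn_compLpL L' f] with x h h₁ h₂
  rw [h, mul_apply_eq_comp, mul_apply_eq_comp, h₁, h₂]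

theorem ContinuousLinearMap.one_compLpL : (1 : E →L[ℂ] E).compLpL p μ = 1 := by
  ext1 f
  refine Lp.ext ?_
  filter_upwards [coeFn_compLpL (1 : E →L[ℂ] E) f] with x h
  rw [h, one_apply_eq_self, one_apply_eq_self]

end CompLpL

theorem alpha0_mul_alpha0 : alpha0 * alpha0 = 1 := by
  ext i j; fin_cases i <;> fin_cases j <;> simp [alpha0, Matrix.mul_apply, Fin.sum_univ_four]

theorem star_alpha0 : star alpha0 = alpha0 := by
  ext i j; fin_cases i <;> fin_cases j <;> simp [alpha0, Matrix.star_apply]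

theorem alpha0_mem_unitary : alpha0 ∈ unitary (Matrix (Fin 4) (Fin 4) ℂ) :=
  Unitary.mem_iff.2 (by simp only [star_alpha0, alpha0_mul_alpha0, and_self])

theorem alpha0_mul_alpha1 : alpha0 * alpha1 = -(alpha1 * alpha0) := by
  ext i j; fin_cases i <;> fin_cases j <;>
    simp [alpha0, alpha1, Matrix.mul_apply, Fin.sum_univ_four]

theorem alpha0_mul_alpha2 : alpha0 * alpha2 = -(alpha2 * alpha0) := by
  ext i j; fin_cases i <;> fin_cases j <;>
    simp [alpha0, alpha2, Matrix.mul_apply, Fin.sum_univ_four]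

theorem alpha0_mul_alpha3 : alpha0 * alpha3 = -(alpha3 * alpha0) := by
  ext i j; fin_cases i <;> fin_cases j <;>
    simp [alpha0, alpha3, Matrix.mul_apply, Fin.sum_univ_four]

theorem InGraphH.compLpL_of_anticommute {θ m : ℝ} {ψ χ : HS} (h : InGraphH θ m ψ χ)
    {M : Matrix (Fin 4) (Fin 4) ℂ} (hM : M ∈ unitary (Matrix (Fin 4) (Fin 4) ℂ))
    (h₁ : M * alpha1 = -(alpha1 * M)) (h₂ : M * alpha2 = -(alpha2 * M))
    (h₃ : M * alpha3 = -(alpha3 * M)) :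
    InGraphH θ m ((Matrix.toEuclideanCLM (𝕜 := ℂ) M).compLpL 2 volume ψ)
      (-(Matrix.toEuclideanCLM (𝕜 := ℂ) M).compLpL 2 volume χ) := by
  set A : E4 →L[ℂ] E4 := Matrix.toEuclideanCLM (𝕜 := ℂ) M
  have hA : AntilipschitzWith 1 A := (AddMonoidHomClass.isometry_of_norm A
    (norm_map_of_mem_unitary (Unitary.map_mem Matrix.toEuclideanCLM hM))).antilipschitz
  -- `mvec M` is `Matrix.toEuclideanCLM M` by definition.
  have hanti {N : Matrix (Fin 4) (Fin 4) ℂ} (hN : M * N = -(N * M)) (v : E4) :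
      A (mvec N v) = -mvec N (A v) := by
    simp [A, mvec, Matrix.mulVec_mulVec, hN, Matrix.neg_mulVec]
  obtain ⟨hψ, g, hg, hχ⟩ := h
  have hAψ := (coeFn_compLpL A ψ).symm
  refine ⟨(hψ.comp_antilipschitz A hA).congr_ae hAψ, _,
    (hg.comp_antilipschitz A hA).congr_ae hAψ .rfl, ?_⟩
  filter_upwards [Lp.coeFn_neg (A.compLpL 2 volume χ), coeFn_compLpL A χ, hAψ, hχ]
    with x hneg hAχ hAψx hχx
  rw [hneg, Pi.neg_apply, hAχ, hχx, ← hAψx]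
  simp only [map_add, map_sub, map_smul, hanti h₁, hanti h₂, hanti h₃]
  module

def alpha0Lp : HS →L[ℂ] HS := (Matrix.toEuclideanCLM (𝕜 := ℂ) alpha0).compLpL 2 volume

theorem alpha0Lp_mul_self : alpha0Lp * alpha0Lp = 1 := by
  rw [alpha0Lp, ← mul_compLpL, ← map_mul, alpha0_mul_alpha0, map_one, one_compLpL]

theorem norm_alpha0Lp_le : ‖alpha0Lp‖ ≤ 1 :=
  (norm_compLpL_le _).trans
    (CStarRing.norm_of_mem_unitary (Unitary.map_mem _ alpha0_mem_unitary)).le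

theorem InGraphH.map_alpha0Lp {θ m : ℝ} {ψ χ : HS} (h : InGraphH θ m ψ χ) :
    InGraphH θ m (alpha0Lp ψ) (-alpha0Lp χ) :=
  h.compLpL_of_anticommute alpha0_mem_unitary alpha0_mul_alpha1 alpha0_mul_alpha2
    alpha0_mul_alpha3

theorem InGraphH.map_neg_alpha0Lp {θ m : ℝ} {ψ χ : HS} (h : InGraphH θ m ψ χ) :
    InGraphH θ m (-alpha0Lp ψ) (alpha0Lp χ) := by
  have hanti {N : Matrix (Fin 4) (Fin 4) ℂ} (hN : alpha0 * N = -(N * alpha0)) :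
      -alpha0 * N = -(N * -alpha0) := by
    rw [neg_mul, mul_neg, hN]
  have hneg : -alpha0 ∈ unitary (Matrix (Fin 4) (Fin 4) ℂ) :=
    Unitary.mem_iff.2 (by
      simp only [star_neg, neg_mul_neg, star_alpha0, alpha0_mul_alpha0, and_self])
  have := h.compLpL_of_anticommute hneg (hanti alpha0_mul_alpha1) (hanti alpha0_mul_alpha2)
    (hanti alpha0_mul_alpha3)
  rwa [map_neg, neg_compLpL, ← alpha0Lp, neg_apply, neg_apply, neg_neg] at this

theorem pseudospectrum_symm_general (θ m : ℝ) (ε : ℝ) (z : ℂ) :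
    InPseudospectrumH θ m ε z ↔ InPseudospectrumH θ m ε (-z) := by
  have hres {w : ℂ} {R : HS →L[ℂ] HS} (hR : IsResolventOf (InGraphH θ m) w R) :
      IsResolventOf (InGraphH θ m) (-w) (-(alpha0Lp * R * alpha0Lp)) :=
    hR.neg_mul_mul alpha0Lp_mul_self (fun _ _ h => h.map_alpha0Lp)
      (fun _ _ h => h.map_neg_alpha0Lp)
  suffices ∀ w, InPseudospectrumH θ m ε w → InPseudospectrumH θ m ε (-w) from
    ⟨this z, fun h => neg_neg z ▸ this (-z) h⟩
  rintro w (hw | ⟨hε, R, hR, hRε⟩)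
  · exact Or.inl fun ⟨R, hR⟩ => hw ⟨_, neg_neg w ▸ hres hR⟩
  · refine Or.inr ⟨hε, _, hres hR, ?_⟩
    rwa [norm_neg, norm_mul_mul_of_mul_self_eq_one norm_alpha0Lp_le alpha0Lp_mul_self]

/-- for every `ε ≥ 0`, `z ∈ σ_ε(H_θ)` if and only if `-z ∈ σ_ε(H_θ)`
(with the convention `σ₀ = σ`). -/
theorem pseudospectrum_symm (θ m : ℝ) (hθ : θ ∈ Set.Ioo (-(Real.pi / 2)) (Real.pi / 2))
    (hm : 0 ≤ m) (ε : ℝ) (hε : 0 ≤ ε) (z : ℂ) :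
    InPseudospectrumH θ m ε z ↔ InPseudospectrumH θ m ε (-z) :=
  pseudospectrum_symm_general θ m ε z
end
end

section
/- Let θ ∈ (-π/2,π/2) and m ≥ 0. Then for both choices of sign, lim_{n→∞} (log‖P_n^±‖)/n = log√((1 + |sin θ|)/(1 - |sin θ|)). In particular, if θ ≠ 0 the norms of the spectral projectors of H_θ grow exponentially in n. -/
noncomputable section

open MeasureTheory Filter Complex
open scoped InnerProductSpace

/-- The rotated Hermite function `φ_n(x) = h_n(e^{iθ/2} x)`, where `Hh n` is the entire
extension of the `n`-th Hermite function. -/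
def phiFun (Hh : ℕ → ℂ → ℂ) (θ : ℝ) (n : ℕ) : ℝ → ℂ := fun x : ℝ =>
  Hh n (Complex.exp ((θ / 2 : ℝ) * Complex.I) * (x : ℂ))

/-- The four unnormalized vectors from which `u¹, u², u³, u⁴` are obtained. -/
def vRaw (m : ℝ) (n : ℕ) : Fin 4 → E4 :=
  ![(WithLp.equiv 2 (Fin 4 → ℂ)).symm
      ![(Real.sqrt (2 * n) : ℂ), ((Real.sqrt (2 * n + m ^ 2) - m : ℝ) : ℂ),
        (Real.sqrt (2 * n) : ℂ), ((Real.sqrt (2 * n + m ^ 2) - m : ℝ) : ℂ)],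
    (WithLp.equiv 2 (Fin 4 → ℂ)).symm
      ![-(Real.sqrt (2 * n) : ℂ), ((Real.sqrt (2 * n + m ^ 2) + m : ℝ) : ℂ),
        (Real.sqrt (2 * n) : ℂ), (-(Real.sqrt (2 * n + m ^ 2) + m : ℝ) : ℂ)],
    (WithLp.equiv 2 (Fin 4 → ℂ)).symm
      ![-(Real.sqrt (2 * n) : ℂ), ((Real.sqrt (2 * n + m ^ 2) + m : ℝ) : ℂ),
        -(Real.sqrt (2 * n) : ℂ), ((Real.sqrt (2 * n + m ^ 2) + m : ℝ) : ℂ)],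
    (WithLp.equiv 2 (Fin 4 → ℂ)).symm
      ![(Real.sqrt (2 * n) : ℂ), ((Real.sqrt (2 * n + m ^ 2) - m : ℝ) : ℂ),
        -(Real.sqrt (2 * n) : ℂ), ((-(Real.sqrt (2 * n + m ^ 2)) + m : ℝ) : ℂ)]]

/-- The unit vectors `u¹, u², u³, u⁴` in `ℂ⁴`. -/
def uVec (m : ℝ) (n : ℕ) : Fin 4 → E4 := fun j => ((‖vRaw m n j‖ : ℝ) : ℂ)⁻¹ • vRaw m n j

/-- The `i`-th component of a vector in `ℂ⁴`. -/
def vcomp (v : E4) (i : Fin 4) : ℂ := (WithLp.equiv 2 (Fin 4 → ℂ)) v i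

/-- The eigenfunction `χ^j_n = (u^j₁ φ_n, u^j₂ φ_{n-1}, u^j₃ φ_n, u^j₄ φ_{n-1})ᵀ`
(as a function `ℝ → ℂ⁴`); the functions `χ̃^j_n` are obtained replacing `θ` by `-θ`. -/
def chiFun (Hh : ℕ → ℂ → ℂ) (θ m : ℝ) (n : ℕ) (j : Fin 4) : ℝ → E4 := fun x : ℝ =>
  (WithLp.equiv 2 (Fin 4 → ℂ)).symm
    ![vcomp (uVec m n j) 0 * phiFun Hh θ n x,
      vcomp (uVec m n j) 1 * phiFun Hh θ (n - 1) x,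
      vcomp (uVec m n j) 2 * phiFun Hh θ n x,
      vcomp (uVec m n j) 3 * phiFun Hh θ (n - 1) x]

/-- The spectral projector `P_n^+ = χ¹_n(χ̃¹_n, ·) + χ²_n(χ̃²_n, ·)` on `L²(ℝ; ℂ⁴)`. -/
def Pplus (Hh : ℕ → ℂ → ℂ) (θ m : ℝ)
    (hχ : ∀ (n : ℕ) (j : Fin 4), MemLp (chiFun Hh θ m n j) 2 volume)
    (hχt : ∀ (n : ℕ) (j : Fin 4), MemLp (chiFun Hh (-θ) m n j) 2 volume)
    (n : ℕ) : HS →L[ℂ] HS :=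
  (innerSL ℂ ((hχt n 0).toLp (chiFun Hh (-θ) m n 0))).smulRight
      ((hχ n 0).toLp (chiFun Hh θ m n 0)) +
    (innerSL ℂ ((hχt n 1).toLp (chiFun Hh (-θ) m n 1))).smulRight
      ((hχ n 1).toLp (chiFun Hh θ m n 1))

/-- The spectral projector `P_n^- = χ³_n(χ̃³_n, ·) + χ⁴_n(χ̃⁴_n, ·)` on `L²(ℝ; ℂ⁴)`. -/
def Pminus (Hh : ℕ → ℂ → ℂ) (θ m : ℝ)
    (hχ : ∀ (n : ℕ) (j : Fin 4), MemLp (chiFun Hh θ m n j) 2 volume)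
    (hχt : ∀ (n : ℕ) (j : Fin 4), MemLp (chiFun Hh (-θ) m n j) 2 volume)
    (n : ℕ) : HS →L[ℂ] HS :=
  (innerSL ℂ ((hχt n 2).toLp (chiFun Hh (-θ) m n 2))).smulRight
      ((hχ n 2).toLp (chiFun Hh θ m n 2)) +
    (innerSL ℂ ((hχt n 3).toLp (chiFun Hh (-θ) m n 3))).smulRight
      ((hχ n 3).toLp (chiFun Hh θ m n 3))

/-!
`P_n^±` is a sum of two rank-one maps `χ (χ̃, ·)` whose co-vectors `χ̃` are orthogonal, so
`‖χ‖ ‖χ̃‖ ≤ ‖P_n^±‖ ≤ Σ ‖χ‖ ‖χ̃‖`. Because each `u^j` is a unit vector and `‖φ_k‖ = ‖φ̃_k‖`,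
`‖χ^j_n‖² = ‖χ̃^j_n‖²` is a convex combination of `‖φ_n‖²` and `‖φ_{n-1}‖²`. Hence `‖P_n^±‖`
lies between the minimum and twice the maximum of these two numbers, which are positive (the
Hermite functions are entire and nonzero) and whose logarithms, divided by `n`, have the same
limit as `log ‖φ_n‖² / n`.
-/

open Set Topology

namespace MeasureTheory

theorem MemLp.norm_toLp_sq {α F : Type*} [MeasurableSpace α] {μ : Measure α}
    [NormedAddCommGroup F] {f : α → F} (hf : MemLp f 2 μ) :
    ‖hf.toLp f‖ ^ 2 = ∫ x, ‖f x‖ ^ 2 ∂μ := by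
  rw [Lp.norm_toLp, hf.eLpNorm_eq_integral_rpow_norm two_ne_zero ENNReal.ofNat_ne_top,
    ENNReal.toReal_ofReal (by positivity), ← Real.rpow_natCast, ← Real.rpow_mul
      (integral_nonneg fun x => by positivity)]
  norm_num

theorem MemLp.inner_toLp_toLp {α F : Type*} [MeasurableSpace α] {μ : Measure α}
    {𝕜 : Type*} [RCLike 𝕜] [NormedAddCommGroup F] [InnerProductSpace 𝕜 F] {f g : α → F}
    (hf : MemLp f 2 μ) (hg : MemLp g 2 μ) :
    ⟪hf.toLp f, hg.toLp g⟫_𝕜 = ∫ x, ⟪f x, g x⟫_𝕜 ∂μ := by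
  rw [L2.inner_def]
  refine integral_congr_ae ?_
  filter_upwards [hf.coeFn_toLp, hg.coeFn_toLp] with x hfx hgx
  rw [hfx, hgx]

end MeasureTheory

theorem Differentiable.eq_zero_of_ae_ofReal_eq_zero {F : ℂ → ℂ} (hF : Differentiable ℂ F)
    (h : ∀ᵐ x : ℝ, F x = 0) : F = 0 := by
  have hreal : (fun x : ℝ => F x) = 0 :=
    ((hF.continuous.comp continuous_ofReal).ae_eq_iff_eq volume continuous_zero).1 h
  have hfreq : ∃ᶠ z in 𝓝[≠] (0 : ℂ), F z = 0 := by
    have hmaps : Tendsto ((↑) : ℝ → ℂ) (𝓝[≠] 0) (𝓝[≠] 0) :=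
      continuous_ofReal.continuousWithinAt.tendsto_nhdsWithin fun x hx => by simpa using hx
    exact hmaps.frequently (Frequently.of_forall fun x => congrFun hreal x)
  funext z
  exact AnalyticOnNhd.eqOn_zero_of_preconnected_of_frequently_eq_zero (fun w _ => hF.analyticAt w)
    isPreconnected_univ (mem_univ 0) hfreq (mem_univ z)

theorem norm_toLp_comp_const_mul_pos {F : ℂ → ℂ} (hF : Differentiable ℂ F) (hF0 : F ≠ 0)
    {c : ℂ} (hc : c ≠ 0) (hmem : MemLp (fun x : ℝ => F (c * x)) 2 volume) :
    0 < ‖hmem.toLp _‖ := by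
  refine norm_pos_iff.2 fun h0 => hF0 ?_
  have hG : (fun z => F (c * z)) = 0 := by
    refine (hF.comp (differentiable_id.const_mul c)).eq_zero_of_ae_ofReal_eq_zero ?_
    filter_upwards [hmem.coeFn_toLp, Lp.eq_zero_iff_ae_eq_zero.1 h0] with x hx h0x
    simpa [hx] using h0x
  funext z
  simpa [mul_div_cancel₀ _ hc] using congrFun hG (z / c)

open ComplexConjugate

section Eigenvectors

variable (m : ℝ)

theorem vcomp_uVec (n : ℕ) (j i : Fin 4) :
    vcomp (uVec m n j) i = ((‖vRaw m n j‖ : ℝ) : ℂ)⁻¹ * vcomp (vRaw m n j) i := by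
  simp [vcomp, uVec]

theorem vRaw_ne_zero {n : ℕ} (hn : n ≠ 0) (j : Fin 4) : vRaw m n j ≠ 0 := by
  intro h
  have h0 := congrArg (fun v => vcomp v 0) h
  have hs : Real.sqrt (2 * n) ≠ 0 := by positivity
  fin_cases j <;> simp_all [vRaw]

theorem uVec_weights_sum {n : ℕ} (hn : n ≠ 0) (j : Fin 4) :
    (‖vcomp (uVec m n j) 0‖ ^ 2 + ‖vcomp (uVec m n j) 2‖ ^ 2)
      + (‖vcomp (uVec m n j) 1‖ ^ 2 + ‖vcomp (uVec m n j) 3‖ ^ 2) = 1 := by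
  have hunit : ‖uVec m n j‖ = 1 := by
    simpa [uVec] using norm_smul_inv_norm (𝕜 := ℂ) (vRaw_ne_zero m hn j)
  have hsum := EuclideanSpace.norm_sq_eq (uVec m n j)
  rw [hunit, Fin.sum_univ_four] at hsum
  simp only [vcomp, WithLp.equiv_apply]
  linear_combination -hsum

theorem conj_vcomp_uVec_mul_add_eq_zero (n : ℕ) {j k i i' : Fin 4}
    (hjk : j = 1 ∧ k = 0 ∨ j = 3 ∧ k = 2) (hii' : i = 0 ∧ i' = 2 ∨ i = 1 ∧ i' = 3) :
    conj (vcomp (uVec m n j) i) * vcomp (uVec m n k) i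
      + conj (vcomp (uVec m n j) i') * vcomp (uVec m n k) i' = 0 := by
  obtain ⟨rfl, rfl⟩ | ⟨rfl, rfl⟩ := hjk <;> obtain ⟨rfl, rfl⟩ | ⟨rfl, rfl⟩ := hii' <;>
  · simp only [vcomp_uVec]
    simp only [vcomp, vRaw, WithLp.equiv_symm_apply, WithLp.equiv_apply, Matrix.cons_val_zero,
      Matrix.cons_val_one, Matrix.cons_val_two, Matrix.cons_val_three, Matrix.head_cons,
      Matrix.tail_cons, map_mul, map_neg, map_inv₀, Complex.conj_ofReal]
    push_cast
    ring

end Eigenvectors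

section Eigenfunctions

variable {Hh : ℕ → ℂ → ℂ} {θ m : ℝ} {n : ℕ}

theorem norm_chiFun_apply_sq (j : Fin 4) (x : ℝ) :
    ‖chiFun Hh θ m n j x‖ ^ 2
      = (‖vcomp (uVec m n j) 0‖ ^ 2 + ‖vcomp (uVec m n j) 2‖ ^ 2) * ‖phiFun Hh θ n x‖ ^ 2
        + (‖vcomp (uVec m n j) 1‖ ^ 2 + ‖vcomp (uVec m n j) 3‖ ^ 2)
          * ‖phiFun Hh θ (n - 1) x‖ ^ 2 := by
  rw [EuclideanSpace.norm_sq_eq, Fin.sum_univ_four]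
  simp only [chiFun, WithLp.equiv_symm_apply, PiLp.toLp_apply, Matrix.cons_val_zero,
    Matrix.cons_val_one, Matrix.cons_val_two, Matrix.cons_val_three, Matrix.head_cons,
    Matrix.tail_cons, norm_mul, mul_pow]
  ring

theorem inner_chiFun_apply_eq_zero {j k : Fin 4} (hjk : j = 1 ∧ k = 0 ∨ j = 3 ∧ k = 2)
    (x : ℝ) : ⟪chiFun Hh θ m n j x, chiFun Hh θ m n k x⟫_ℂ = 0 := by
  simp only [chiFun, PiLp.inner_apply, Fin.sum_univ_four, WithLp.equiv_symm_apply,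
    RCLike.inner_apply, Matrix.cons_val_zero, Matrix.cons_val_one,
    Matrix.cons_val_two, Matrix.cons_val_three, Matrix.head_cons, Matrix.tail_cons, map_mul]
  linear_combination
    (conj (phiFun Hh θ n x) * phiFun Hh θ n x)
        * conj_vcomp_uVec_mul_add_eq_zero m n hjk (Or.inl ⟨rfl, rfl⟩)
      + (conj (phiFun Hh θ (n - 1) x) * phiFun Hh θ (n - 1) x)
        * conj_vcomp_uVec_mul_add_eq_zero m n hjk (Or.inr ⟨rfl, rfl⟩)

theorem norm_toLp_chiFun_sq {j : Fin 4} (hχ : MemLp (chiFun Hh θ m n j) 2 volume)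
    (hφ : MemLp (phiFun Hh θ n) 2 volume) (hφ' : MemLp (phiFun Hh θ (n - 1)) 2 volume) :
    ‖hχ.toLp _‖ ^ 2
      = (‖vcomp (uVec m n j) 0‖ ^ 2 + ‖vcomp (uVec m n j) 2‖ ^ 2) * ‖hφ.toLp _‖ ^ 2
        + (‖vcomp (uVec m n j) 1‖ ^ 2 + ‖vcomp (uVec m n j) 3‖ ^ 2) * ‖hφ'.toLp _‖ ^ 2 := by
  simp only [MemLp.norm_toLp_sq, norm_chiFun_apply_sq]
  rw [integral_add ((hφ.integrable_norm_pow two_ne_zero).const_mul _)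
      ((hφ'.integrable_norm_pow two_ne_zero).const_mul _), integral_const_mul,
    integral_const_mul]

theorem norm_toLp_chiFun_sq_mem_Icc (hn : n ≠ 0) {j : Fin 4}
    (hχ : MemLp (chiFun Hh θ m n j) 2 volume)
    (hφ : MemLp (phiFun Hh θ n) 2 volume) (hφ' : MemLp (phiFun Hh θ (n - 1)) 2 volume) :
    ‖hχ.toLp _‖ ^ 2 ∈ Icc (min (‖hφ.toLp _‖ ^ 2) (‖hφ'.toLp _‖ ^ 2))
      (max (‖hφ.toLp _‖ ^ 2) (‖hφ'.toLp _‖ ^ 2)) := by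
  rw [norm_toLp_chiFun_sq hχ hφ hφ']
  exact ⟨Convex.min_le_combo _ _ (by positivity) (by positivity) (uVec_weights_sum m hn j),
    Convex.combo_le_max _ _ (by positivity) (by positivity) (uVec_weights_sum m hn j)⟩

theorem inner_toLp_chiFun_eq_zero {j k : Fin 4} (hjk : j = 1 ∧ k = 0 ∨ j = 3 ∧ k = 2)
    (hχj : MemLp (chiFun Hh θ m n j) 2 volume) (hχk : MemLp (chiFun Hh θ m n k) 2 volume) :
    ⟪hχj.toLp _, hχk.toLp _⟫_ℂ = 0 := by
  simp [MemLp.inner_toLp_toLp, inner_chiFun_apply_eq_zero hjk]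

end Eigenfunctions

theorem mul_norm_le_norm_smulRight_add_smulRight {𝕜 H : Type*} [RCLike 𝕜]
    [NormedAddCommGroup H] [InnerProductSpace 𝕜 H] {a b c d : H} (hdc : ⟪d, c⟫_𝕜 = 0) :
    ‖c‖ * ‖a‖ ≤ ‖(innerSL 𝕜 c).smulRight a + (innerSL 𝕜 d).smulRight b‖ := by
  set T := (innerSL 𝕜 c).smulRight a + (innerSL 𝕜 d).smulRight b
  rcases (norm_nonneg c).eq_or_lt with hc | hc
  · rw [← hc, zero_mul]
    exact norm_nonneg T
  have hTc : T c = ((‖c‖ ^ 2 : ℝ) : 𝕜) • a := by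
    simp [T, hdc, inner_self_eq_norm_sq_to_K]
  refine le_of_mul_le_mul_right ?_ hc
  calc ‖c‖ * ‖a‖ * ‖c‖ = ‖T c‖ := by
        rw [hTc, norm_smul, RCLike.norm_ofReal, abs_of_nonneg (by positivity)]
        ring
    _ ≤ ‖T‖ * ‖c‖ := T.le_opNorm c

theorem norm_smulRight_add_smulRight_le {𝕜 H : Type*} [RCLike 𝕜]
    [NormedAddCommGroup H] [InnerProductSpace 𝕜 H] (a b c d : H) :
    ‖(innerSL 𝕜 c).smulRight a + (innerSL 𝕜 d).smulRight b‖ ≤ ‖c‖ * ‖a‖ + ‖d‖ * ‖b‖ := by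
  refine (norm_add_le _ _).trans_eq ?_
  rw [ContinuousLinearMap.norm_smulRight_apply, ContinuousLinearMap.norm_smulRight_apply,
    innerSL_apply_norm, innerSL_apply_norm]

def chiProj (Hh : ℕ → ℂ → ℂ) (θ m : ℝ)
    (hχ : ∀ (n : ℕ) (j : Fin 4), MemLp (chiFun Hh θ m n j) 2 volume)
    (hχt : ∀ (n : ℕ) (j : Fin 4), MemLp (chiFun Hh (-θ) m n j) 2 volume)
    (n : ℕ) (j k : Fin 4) : HS →L[ℂ] HS :=
  (innerSL ℂ ((hχt n j).toLp (chiFun Hh (-θ) m n j))).smulRight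
      ((hχ n j).toLp (chiFun Hh θ m n j)) +
    (innerSL ℂ ((hχt n k).toLp (chiFun Hh (-θ) m n k))).smulRight
      ((hχ n k).toLp (chiFun Hh θ m n k))

theorem norm_chiProj_mem_Icc {Hh : ℕ → ℂ → ℂ} {θ m : ℝ}
    (hχ : ∀ (n : ℕ) (j : Fin 4), MemLp (chiFun Hh θ m n j) 2 volume)
    (hχt : ∀ (n : ℕ) (j : Fin 4), MemLp (chiFun Hh (-θ) m n j) 2 volume)
    (hmem : ∀ n : ℕ, MemLp (phiFun Hh θ n) 2 volume)
    (hmemt : ∀ n : ℕ, MemLp (phiFun Hh (-θ) n) 2 volume)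
    (hnorm : ∀ n : ℕ, ‖(hmem n).toLp (phiFun Hh θ n)‖ = ‖(hmemt n).toLp (phiFun Hh (-θ) n)‖)
    {n : ℕ} (hn : n ≠ 0) {j k : Fin 4} (hjk : k = 1 ∧ j = 0 ∨ k = 3 ∧ j = 2) :
    ‖chiProj Hh θ m hχ hχt n j k‖ ∈
      Icc (min (‖(hmem n).toLp _‖ ^ 2) (‖(hmem (n - 1)).toLp _‖ ^ 2))
        (2 * max (‖(hmem n).toLp _‖ ^ 2) (‖(hmem (n - 1)).toLp _‖ ^ 2)) := by
  have hnorm_chi : ∀ i, ‖(hχt n i).toLp _‖ = ‖(hχ n i).toLp _‖ := fun i => by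
    rw [← sq_eq_sq₀ (norm_nonneg _) (norm_nonneg _), norm_toLp_chiFun_sq _ (hmemt n)
      (hmemt (n - 1)), norm_toLp_chiFun_sq _ (hmem n) (hmem (n - 1)), hnorm, hnorm]
  have hbounds := fun i => norm_toLp_chiFun_sq_mem_Icc hn (hχ n i) (hmem n) (hmem (n - 1))
  constructor
  · calc _ ≤ ‖(hχ n j).toLp _‖ ^ 2 := (hbounds j).1
      _ = ‖(hχt n j).toLp _‖ * ‖(hχ n j).toLp _‖ := by rw [hnorm_chi, sq]
      _ ≤ _ := mul_norm_le_norm_smulRight_add_smulRight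
          (inner_toLp_chiFun_eq_zero hjk (hχt n k) (hχt n j))
  · calc _ ≤ ‖(hχt n j).toLp _‖ * ‖(hχ n j).toLp _‖ + ‖(hχt n k).toLp _‖ * ‖(hχ n k).toLp _‖ :=
          norm_smulRight_add_smulRight_le _ _ _ _
      _ = ‖(hχ n j).toLp _‖ ^ 2 + ‖(hχ n k).toLp _‖ ^ 2 := by rw [hnorm_chi, hnorm_chi, sq, sq]
      _ ≤ _ := by linarith [(hbounds j).2, (hbounds k).2]

theorem Filter.Tendsto.div_natCast_comp_sub_one {u : ℕ → ℝ} {L : ℝ}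
    (h : Tendsto (fun n : ℕ => u n / n) atTop (𝓝 L)) :
    Tendsto (fun n : ℕ => u (n - 1) / n) atTop (𝓝 L) := by
  rw [← tendsto_add_atTop_iff_nat 1]
  have hratio : Tendsto (fun n : ℕ => (n : ℝ) / (n + 1)) atTop (𝓝 1) :=
    tendsto_natCast_div_add_atTop 1
  refine (by simpa using h.mul hratio : Tendsto _ atTop (𝓝 L)).congr' ?_
  filter_upwards [eventually_ne_atTop 0] with n hn
  field_simp
  push_cast
  ring

theorem tendsto_log_div_of_mem_Icc {S N : ℕ → ℝ} {C L : ℝ} (hC : 0 < C) (hN : ∀ n, 0 < N n)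
    (hS : ∀ᶠ n in atTop, S n ∈ Icc (min (N n) (N (n - 1))) (C * max (N n) (N (n - 1))))
    (h : Tendsto (fun n : ℕ => Real.log (N n) / n) atTop (𝓝 L)) :
    Tendsto (fun n : ℕ => Real.log (S n) / n) atTop (𝓝 L) := by
  have h' := h.div_natCast_comp_sub_one
  have hlow := h.min h'
  have hup := (tendsto_const_div_atTop_nhds_zero_nat (Real.log C)).add (h.max h')
  rw [min_self] at hlow
  rw [max_self, zero_add] at hup
  refine tendsto_of_tendsto_of_tendsto_of_le_of_le' hlow hup ?_ ?_
  all_goals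
    filter_upwards [hS, eventually_gt_atTop 0] with n ⟨hSlow, hSup⟩ hn
    have hn' : (0 : ℝ) < n := Nat.cast_pos.2 hn
  · obtain hmin | hmin := min_choice (N n) (N (n - 1)) <;> rw [hmin] at hSlow
    · exact (min_le_left _ _).trans (div_le_div_of_nonneg_right
        (Real.log_le_log (hN _) hSlow) hn'.le)
    · exact (min_le_right _ _).trans (div_le_div_of_nonneg_right
        (Real.log_le_log (hN _) hSlow) hn'.le)
  · have hSpos : 0 < S n := (lt_min (hN n) (hN (n - 1))).trans_le hSlow
    rw [max_div_div_right hn'.le, ← add_div, div_le_div_iff_of_pos_right hn', ← max_add_add_left]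
    obtain hmax | hmax := max_choice (N n) (N (n - 1)) <;> rw [hmax] at hSup
    · refine le_max_of_le_left ?_
      rw [← Real.log_mul hC.ne' (hN _).ne']
      exact Real.log_le_log hSpos hSup
    · refine le_max_of_le_right ?_
      rw [← Real.log_mul hC.ne' (hN _).ne']
      exact Real.log_le_log hSpos hSup

theorem eventually_exp_pow_le_of_tendsto_log_div {S : ℕ → ℝ} {c L : ℝ} (hcL : c < L)
    (hS : ∀ᶠ n in atTop, 0 < S n)
    (h : Tendsto (fun n : ℕ => Real.log (S n) / n) atTop (𝓝 L)) :
    ∀ᶠ n : ℕ in atTop, Real.exp c ^ n ≤ S n := by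
  filter_upwards [h.eventually (eventually_gt_nhds hcL), hS, eventually_gt_atTop 0]
    with n hlog hSn hn
  rw [← Real.exp_nat_mul, ← Real.exp_log hSn]
  exact Real.exp_le_exp.2 (by rw [lt_div_iff₀ (Nat.cast_pos.2 hn)] at hlog; linarith)

theorem log_sqrt_one_add_div_one_sub_pos {s : ℝ} (hs0 : 0 < s) (hs1 : s < 1) :
    0 < Real.log (Real.sqrt ((1 + s) / (1 - s))) := by
  refine Real.log_pos ((Real.lt_sqrt zero_le_one).2 ?_)
  rw [one_pow, one_lt_div (by linarith)]
  linarith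

theorem abs_sin_mem_Ioo {θ : ℝ} (hθ : θ ∈ Ioo (-(Real.pi / 2)) (Real.pi / 2)) (hθ0 : θ ≠ 0) :
    |Real.sin θ| ∈ Ioo 0 1 := by
  refine ⟨abs_pos.2 fun h => hθ0 ?_, ?_⟩
  · exact (Real.sin_eq_zero_iff_of_lt_of_lt (by linarith [hθ.1, Real.pi_pos])
      (by linarith [hθ.2, Real.pi_pos])).1 h
  · rw [← sq_lt_one_iff_abs_lt_one, ← Real.cos_sq_add_sin_sq θ, lt_add_iff_pos_left]
    exact pow_pos (Real.cos_pos_of_mem_Ioo hθ) 2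

theorem norm_toLp_phiFun_pos {Hh : ℕ → ℂ → ℂ} (hent : ∀ n, Differentiable ℂ (Hh n))
    {e : ℕ → Lp ℂ 2 (volume : Measure ℝ)}
    (he : ∀ n, (e n : ℝ → ℂ) =ᵐ[volume] fun x : ℝ => Hh n (x : ℂ))
    (horth : Orthonormal ℂ e) (θ : ℝ) {n : ℕ} (hmem : MemLp (phiFun Hh θ n) 2 volume) :
    0 < ‖hmem.toLp (phiFun Hh θ n)‖ := by
  refine norm_toLp_comp_const_mul_pos (hent n) (fun h0 => horth.ne_zero n ?_)
    (Complex.exp_ne_zero _) hmem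
  rw [Lp.eq_zero_iff_ae_eq_zero]
  filter_upwards [he n] with x hx
  simp [hx, h0]

theorem Pplus_eq_chiProj (Hh : ℕ → ℂ → ℂ) (θ m : ℝ)
    (hχ : ∀ (n : ℕ) (j : Fin 4), MemLp (chiFun Hh θ m n j) 2 volume)
    (hχt : ∀ (n : ℕ) (j : Fin 4), MemLp (chiFun Hh (-θ) m n j) 2 volume) (n : ℕ) :
    Pplus Hh θ m hχ hχt n = chiProj Hh θ m hχ hχt n 0 1 := rfl

theorem Pminus_eq_chiProj (Hh : ℕ → ℂ → ℂ) (θ m : ℝ)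
    (hχ : ∀ (n : ℕ) (j : Fin 4), MemLp (chiFun Hh θ m n j) 2 volume)
    (hχt : ∀ (n : ℕ) (j : Fin 4), MemLp (chiFun Hh (-θ) m n j) 2 volume) (n : ℕ) :
    Pminus Hh θ m hχ hχt n = chiProj Hh θ m hχ hχt n 2 3 := rfl

theorem tendsto_log_Pproj_general (θ m : ℝ)
    (hθ : θ ∈ Set.Ioo (-(Real.pi / 2)) (Real.pi / 2))
    (Hh : ℕ → ℂ → ℂ) (hent : ∀ n, Differentiable ℂ (Hh n))
    (e : ℕ → Lp ℂ 2 (volume : Measure ℝ))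
    (he : ∀ n, (e n : ℝ → ℂ) =ᵐ[volume] fun x : ℝ => Hh n (x : ℂ))
    (horth : Orthonormal ℂ e)
    (hχ : ∀ (n : ℕ) (j : Fin 4), MemLp (chiFun Hh θ m n j) 2 volume)
    (hχt : ∀ (n : ℕ) (j : Fin 4), MemLp (chiFun Hh (-θ) m n j) 2 volume)
    (hmem : ∀ n : ℕ, MemLp (phiFun Hh θ n) 2 volume)
    (hmemt : ∀ n : ℕ, MemLp (phiFun Hh (-θ) n) 2 volume)
    (hnorm : ∀ n : ℕ, ‖(hmem n).toLp (phiFun Hh θ n)‖ = ‖(hmemt n).toLp (phiFun Hh (-θ) n)‖)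
    (hasym : Filter.Tendsto (fun n : ℕ => Real.log (‖(hmem n).toLp (phiFun Hh θ n)‖ ^ 2) / n)
      Filter.atTop
      (nhds (Real.log (Real.sqrt ((1 + |Real.sin θ|) / (1 - |Real.sin θ|))))))
    :
    Filter.Tendsto (fun n : ℕ => Real.log ‖Pplus Hh θ m hχ hχt n‖ / n) Filter.atTop
      (nhds (Real.log (Real.sqrt ((1 + |Real.sin θ|) / (1 - |Real.sin θ|))))) ∧
    Filter.Tendsto (fun n : ℕ => Real.log ‖Pminus Hh θ m hχ hχt n‖ / n) Filter.atTop
      (nhds (Real.log (Real.sqrt ((1 + |Real.sin θ|) / (1 - |Real.sin θ|))))) ∧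
    (θ ≠ 0 → ∃ c : ℝ, 1 < c ∧ ∀ᶠ n : ℕ in Filter.atTop,
      c ^ n ≤ ‖Pplus Hh θ m hχ hχt n‖ ∧ c ^ n ≤ ‖Pminus Hh θ m hχ hχt n‖) := by
  simp only [Pplus_eq_chiProj, Pminus_eq_chiProj]
  set L := Real.log (Real.sqrt ((1 + |Real.sin θ|) / (1 - |Real.sin θ|)))
  have hN n : 0 < ‖(hmem n).toLp (phiFun Hh θ n)‖ ^ 2 :=
    pow_pos (norm_toLp_phiFun_pos hent he horth θ (hmem n)) 2
  have hbounds {j k : Fin 4} (hjk : k = 1 ∧ j = 0 ∨ k = 3 ∧ j = 2) :=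
    (eventually_ne_atTop 0).mono fun n hn =>
      norm_chiProj_mem_Icc (m := m) hχ hχt hmem hmemt hnorm hn hjk
  have hpos {j k : Fin 4} (hjk : k = 1 ∧ j = 0 ∨ k = 3 ∧ j = 2) :=
    (hbounds hjk).mono fun n hn => (lt_min (hN n) (hN (n - 1))).trans_le hn.1
  have hplus := tendsto_log_div_of_mem_Icc two_pos hN (hbounds (Or.inl ⟨rfl, rfl⟩)) hasym
  have hminus := tendsto_log_div_of_mem_Icc two_pos hN (hbounds (Or.inr ⟨rfl, rfl⟩)) hasym
  refine ⟨hplus, hminus, fun hθ0 => ?_⟩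
  obtain ⟨hs0, hs1⟩ := abs_sin_mem_Ioo hθ hθ0
  have hL : L / 2 < L := half_lt_self (log_sqrt_one_add_div_one_sub_pos hs0 hs1)
  refine ⟨Real.exp (L / 2), Real.one_lt_exp_iff.2 (by linarith), ?_⟩
  exact (eventually_exp_pow_le_of_tendsto_log_div hL (hpos (Or.inl ⟨rfl, rfl⟩)) hplus).and
    (eventually_exp_pow_le_of_tendsto_log_div hL (hpos (Or.inr ⟨rfl, rfl⟩)) hminus)

/-- for both signs, `lim_{n→∞} (log‖P_n^±‖)/n = log√((1+|sin θ|)/(1-|sin θ|))`; in particular, for `θ ≠ 0` the norms of the spectral projectors grow exponentially. -/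
theorem tendsto_log_Pproj (θ m : ℝ)
    (hθ : θ ∈ Set.Ioo (-(Real.pi / 2)) (Real.pi / 2)) (hm : 0 ≤ m)
    (Hh : ℕ → ℂ → ℂ) (hent : ∀ n, Differentiable ℂ (Hh n))
    (hODE : ∀ (n : ℕ) (t : ℂ),
      -(deriv (deriv (Hh n)) t) + t ^ 2 * Hh n t = (2 * (n : ℂ) + 1) * Hh n t)
    (e : ℕ → Lp ℂ 2 (volume : Measure ℝ))
    (he : ∀ n, (e n : ℝ → ℂ) =ᵐ[volume] fun x : ℝ => Hh n (x : ℂ))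
    (horth : Orthonormal ℂ e)
    (hcomp : (Submodule.span ℂ (Set.range e)).topologicalClosure = ⊤)
    (hχ : ∀ (n : ℕ) (j : Fin 4), MemLp (chiFun Hh θ m n j) 2 volume)
    (hχt : ∀ (n : ℕ) (j : Fin 4), MemLp (chiFun Hh (-θ) m n j) 2 volume)
    (hmem : ∀ n : ℕ, MemLp (phiFun Hh θ n) 2 volume)
    (hmemt : ∀ n : ℕ, MemLp (phiFun Hh (-θ) n) 2 volume)
    (hnorm : ∀ n : ℕ, ‖(hmem n).toLp (phiFun Hh θ n)‖ = ‖(hmemt n).toLp (phiFun Hh (-θ) n)‖)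
    (hasym : Filter.Tendsto (fun n : ℕ => Real.log (‖(hmem n).toLp (phiFun Hh θ n)‖ ^ 2) / n)
      Filter.atTop
      (nhds (Real.log (Real.sqrt ((1 + |Real.sin θ|) / (1 - |Real.sin θ|))))))
    :
    Filter.Tendsto (fun n : ℕ => Real.log ‖Pplus Hh θ m hχ hχt n‖ / n) Filter.atTop
      (nhds (Real.log (Real.sqrt ((1 + |Real.sin θ|) / (1 - |Real.sin θ|))))) ∧
    Filter.Tendsto (fun n : ℕ => Real.log ‖Pminus Hh θ m hχ hχt n‖ / n) Filter.atTop
      (nhds (Real.log (Real.sqrt ((1 + |Real.sin θ|) / (1 - |Real.sin θ|))))) ∧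
    (θ ≠ 0 → ∃ c : ℝ, 1 < c ∧ ∀ᶠ n : ℕ in Filter.atTop,
      c ^ n ≤ ‖Pplus Hh θ m hχ hχt n‖ ∧ c ^ n ≤ ‖Pminus Hh θ m hχ hχt n‖) :=
  tendsto_log_Pproj_general θ m hθ Hh hent e he horth hχ hχt hmem hmemt hnorm hasym
end
end
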